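/- Fix δ ∈ [0, 1/2] and R1 ≥ 0. The function g(α) = α − h2(δ ⋆ h2⁻¹(α − R1/2)) is monotonically nondecreasing on the interval [R1/2, 1 + R1/2]; moreover g(R1/2) = R1/2 − h2(δ) and g(1 + R1/2) = R1/2. -/
import Mathlib


open MeasureTheory

/-- Binary entropy function (base 2), with the convention `0 * log₂ 0 = 0`
(automatic since `Real.logb 2 0 = 0`). -/
noncomputable def h2 (p : ℝ) : ℝ :=
  -(p * Real.logb 2 p) - (1 - p) * Real.logb 2 (1 - p)

/-- Inverse of the binary entropy function: for `q ≥ 0`, the unique `r ∈ [0, 1/2]`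
with `h2 r = q` (realized as the infimum of the solution set); `0` for `q < 0`. -/
noncomputable def h2inv (q : ℝ) : ℝ :=
  if q < 0 then 0 else sInf {r : ℝ | 0 ≤ r ∧ r ≤ 1 / 2 ∧ h2 r = q}

/-- Binary convolution `a ⋆ b = a(1-b) + (1-a)b`. -/
def bconv (a b : ℝ) : ℝ := a * (1 - b) + (1 - a) * b



lemma log2_pos : 0 < Real.log 2 := Real.log_pos (by norm_num)

lemma h2_eq (p : ℝ) : h2 p = Real.binEntropy p / Real.log 2 := by
  simp [h2, Real.binEntropy, Real.logb, Real.log_inv]; ring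

lemma h2_zero : h2 0 = 0 := by simp [h2]

lemma h2_half : h2 (1/2 : ℝ) = 1 := by
  rw [h2_eq, (by norm_num : (1:ℝ)/2 = 2⁻¹), Real.binEntropy_two_inv]
  exact div_self log2_pos.ne'

lemma h2_strictMonoOn : StrictMonoOn h2 (Set.Icc 0 (1/2 : ℝ)) := by
  have h := Real.binEntropy_strictMonoOn
  intro a ha b hb hab
  rw [h2_eq, h2_eq]
  have e : (Set.Icc (0:ℝ) (1/2)) = Set.Icc 0 2⁻¹ := by norm_num
  rw [e] at ha hb
  exact div_lt_div_of_pos_right (h ha hb hab) log2_pos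

lemma h2_cont : Continuous h2 := by
  have : h2 = fun p => Real.binEntropy p / Real.log 2 := funext h2_eq
  rw [this]; exact Real.binEntropy_continuous.div_const _


lemma h2inv_h2 {r : ℝ} (hr : r ∈ Set.Icc 0 (1/2:ℝ)) : h2inv (h2 r) = r := by
  have hq : 0 ≤ h2 r := by
    rw [h2_eq]
    exact div_nonneg (Real.binEntropy_nonneg hr.1 (by linarith [hr.2])) log2_pos.le
  rw [h2inv, if_neg (not_lt.2 hq)]
  have hs : {x : ℝ | 0 ≤ x ∧ x ≤ 1/2 ∧ h2 x = h2 r} = {r} := by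
    ext x; simp only [Set.mem_setOf_eq, Set.mem_singleton_iff]
    constructor
    · rintro ⟨h0, h1, h2x⟩
      exact h2_strictMonoOn.injOn ⟨h0, h1⟩ hr h2x
    · rintro rfl; exact ⟨hr.1, hr.2, rfl⟩
  rw [hs, csInf_singleton]

lemma h2inv_spec {q : ℝ} (hq : q ∈ Set.Icc (0:ℝ) 1) :
    h2inv q ∈ Set.Icc 0 (1/2:ℝ) ∧ h2 (h2inv q) = q := by
  obtain ⟨r, hr, hrq⟩ : ∃ r ∈ Set.Icc (0:ℝ) (1/2), h2 r = q := by
    have h := intermediate_value_Icc (by norm_num : (0:ℝ) ≤ 1/2) h2_cont.continuousOn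
    have hmem : q ∈ Set.Icc (h2 0) (h2 (1/2)) := by rw [h2_zero, h2_half]; exact hq
    exact h hmem
  subst hrq
  rw [h2inv_h2 hr]; exact ⟨hr, rfl⟩

lemma h2inv_mono {q1 q2 : ℝ} (hq1 : q1 ∈ Set.Icc (0:ℝ) 1) (hq2 : q2 ∈ Set.Icc (0:ℝ) 1)
    (hle : q1 ≤ q2) : h2inv q1 ≤ h2inv q2 := by
  by_contra hlt
  push_neg at hlt
  have a1 := h2inv_spec hq1; have a2 := h2inv_spec hq2
  have := h2_strictMonoOn a2.1 a1.1 hlt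
  rw [a1.2, a2.2] at this; linarith


lemma hasDerivAt_h2 {p : ℝ} (h0 : p ≠ 0) (h1 : p ≠ 1) :
    HasDerivAt h2 ((Real.log (1 - p) - Real.log p) / Real.log 2) p := by
  have : h2 = fun x => Real.binEntropy x / Real.log 2 := funext h2_eq
  rw [this]
  exact (Real.hasDerivAt_binEntropy h0 h1).div_const _

lemma F_mono (δ : ℝ) (hδ : δ ∈ Set.Icc (0:ℝ) (1/2)) :
    MonotoneOn (fun β => h2 β - h2 (bconv δ β)) (Set.Icc 0 (1/2:ℝ)) := by
  have hint : interior (Set.Icc (0:ℝ) (1/2)) = Set.Ioo 0 (1/2) := interior_Icc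
  have hd : ∀ β ∈ Set.Ioo (0:ℝ) (1/2),
      HasDerivAt (fun β => h2 β - h2 (bconv δ β))
        ((Real.log (1 - β) - Real.log β) / Real.log 2 -
          (Real.log (1 - bconv δ β) - Real.log (bconv δ β)) / Real.log 2 * (1 - 2*δ)) β := by
    intro β hβ
    have hβ0 : (0:ℝ) < β := hβ.1
    have hβ1 : β < 1/2 := hβ.2
    have ht0 : 0 < bconv δ β := by unfold bconv; nlinarith [hδ.1, hδ.2]
    have ht1 : bconv δ β ≤ 1/2 := by unfold bconv; nlinarith [hδ.1, hδ.2]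
    have d1 := hasDerivAt_h2 hβ0.ne' (by linarith : β ≠ 1)
    have dconv : HasDerivAt (fun β => bconv δ β) (1 - 2*δ) β := by
      unfold bconv
      have h : HasDerivAt (fun β : ℝ => δ*(1-β)+(1-δ)*β) (δ*(-1)+(1-δ)*1) β :=
        (((hasDerivAt_id β).const_sub 1).const_mul δ).add ((hasDerivAt_id β).const_mul (1-δ))
      convert h using 1; ring
    have d2 := (hasDerivAt_h2 ht0.ne' (by linarith : bconv δ β ≠ 1)).comp β dconv
    exact d1.sub d2
  apply monotoneOn_of_deriv_nonneg (convex_Icc _ _)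
  · exact (h2_cont.sub (h2_cont.comp (by unfold bconv; fun_prop))).continuousOn
  · rw [hint]; intro x hx; exact (hd x hx).differentiableAt.differentiableWithinAt
  · rw [hint]; intro β hβ
    rw [(hd β hβ).deriv]
    have hβ0 : (0:ℝ) < β := hβ.1
    have hβ1 : β < 1/2 := hβ.2
    have ht0 : 0 < bconv δ β := by unfold bconv; nlinarith [hδ.1, hδ.2]
    have ht1 : bconv δ β ≤ 1/2 := by unfold bconv; nlinarith [hδ.1, hδ.2]
    have htβ : β ≤ bconv δ β := by unfold bconv; nlinarith [hδ.1, hδ.2]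
    have hA : Real.log (bconv δ β) ≤ Real.log (1 - bconv δ β) :=
      Real.log_le_log ht0 (by linarith)
    have hB : Real.log β ≤ Real.log (bconv δ β) := Real.log_le_log hβ0 htβ
    have hC : Real.log (1 - bconv δ β) ≤ Real.log (1 - β) :=
      Real.log_le_log (by linarith) (by linarith)
    have hδ2 : 0 ≤ 1 - 2*δ := by linarith [hδ.2]
    have hδ3 : 1 - 2*δ ≤ 1 := by linarith [hδ.1]
    have key : (Real.log (1 - bconv δ β) - Real.log (bconv δ β)) * (1 - 2*δ) ≤
        Real.log (1 - β) - Real.log β := by nlinarith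
    rw [sub_nonneg, div_mul_eq_mul_div, div_le_div_iff_of_pos_right log2_pos]
    exact key

/-- For `δ ∈ [0,1/2]` and `R1 ≥ 0`, the function
`g(α) = α − h2(δ ⋆ h2⁻¹(α − R1/2))` is monotonically nondecreasing on
`[R1/2, 1 + R1/2]`, with `g(R1/2) = R1/2 − h2(δ)` and `g(1 + R1/2) = R1/2`. -/
theorem stmt2 (δ R1 : ℝ) (hδ : δ ∈ Set.Icc (0 : ℝ) (1 / 2)) (hR1 : 0 ≤ R1)
    (g : ℝ → ℝ) (hg : g = fun α => α - h2 (bconv δ (h2inv (α - R1 / 2)))) :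
    MonotoneOn g (Set.Icc (R1 / 2) (1 + R1 / 2)) ∧
    g (R1 / 2) = R1 / 2 - h2 δ ∧
    g (1 + R1 / 2) = R1 / 2 := by
  have key : ∀ α ∈ Set.Icc (R1/2) (1 + R1/2),
      g α = R1/2 + (h2 (h2inv (α - R1/2)) - h2 (bconv δ (h2inv (α - R1/2)))) := by
    intro α hα
    have hq : α - R1/2 ∈ Set.Icc (0:ℝ) 1 := ⟨by linarith [hα.1], by linarith [hα.2]⟩
    rw [hg]
    simp only
    rw [(h2inv_spec hq).2]
    ring
  refine ⟨?_, ?_, ?_⟩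
  · intro a ha b hb hab
    rw [key a ha, key b hb]
    have hqa : a - R1/2 ∈ Set.Icc (0:ℝ) 1 := ⟨by linarith [ha.1], by linarith [ha.2]⟩
    have hqb : b - R1/2 ∈ Set.Icc (0:ℝ) 1 := ⟨by linarith [hb.1], by linarith [hb.2]⟩
    have hβ := h2inv_mono hqa hqb (by linarith)
    have hF := F_mono δ hδ (h2inv_spec hqa).1 (h2inv_spec hqb).1 hβ
    simp only at hF
    linarith
  · rw [hg]; simp only
    have e1 : R1/2 - R1/2 = h2 0 := by rw [h2_zero]; ring
    rw [e1, h2inv_h2 ⟨le_refl 0, by norm_num⟩]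
    have e2 : bconv δ 0 = δ := by unfold bconv; ring
    rw [e2]
  · rw [hg]; simp only
    have e1 : 1 + R1/2 - R1/2 = h2 (1/2) := by rw [h2_half]; ring
    rw [e1, h2inv_h2 ⟨by norm_num, le_refl _⟩]
    have e2 : bconv δ (1/2) = 1/2 := by unfold bconv; ring
    rw [e2, h2_half]; ring
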